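/- There exists a constant K > 0 such that for all t > 0 and all x, y ∈ ℝ, ∫₀ᵗ ∫_ℝ (G(s,x,z) − G(s,y,z))² dz ds ≤ K·|x−y|. -/

import Mathlib

/-!
Completing the square gives `∫ G(s,x,z) G(s,y,z) dz = G(2s,x,y)`, so with `a = x - y` the inner
integral equals `(πs)^{-1/2} (1 - exp(-a²/(4s)))`. This is at most `(πs)^{-1/2}`, and, since
`1 - e^{-u} ≤ u`, at most `a² (4√π)⁻¹ s^{-3/2}`. Integrating the first bound over `(0, a²)` and
the second over `(a², ∞)` bounds the time integral by `5|a|/(2√π)`, uniformly in `t`.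
-/

open MeasureTheory Real

/-- The Gaussian heat kernel `G(t,x,y) = (2πt)^{-1/2} exp(-(x-y)²/(2t))` for `t > 0`,
and `0` for `t ≤ 0`. -/
noncomputable def heatKernel (t x y : ℝ) : ℝ :=
  if 0 < t then (1 / Real.sqrt (2 * Real.pi * t)) * Real.exp (-(x - y) ^ 2 / (2 * t)) else 0

open ProbabilityTheory

section

variable {s t : ℝ}

lemma heatKernel_of_pos (ht : 0 < t) (x y : ℝ) :
    heatKernel t x y = (√(2 * π * t))⁻¹ * exp (-(x - y) ^ 2 / (2 * t)) := by
  rw [heatKernel, if_pos ht, one_div]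

lemma heatKernel_eq_gaussianPDFReal (ht : 0 < t) (x : ℝ) :
    heatKernel t x = gaussianPDFReal x t.toNNReal := by
  ext z
  rw [heatKernel_of_pos ht, gaussianPDFReal, Real.coe_toNNReal _ ht.le, sub_sq_comm]

lemma integrable_heatKernel (ht : 0 < t) (x : ℝ) : Integrable (heatKernel t x) := by
  rw [heatKernel_eq_gaussianPDFReal ht]
  exact integrable_gaussianPDFReal _ _

lemma heatKernel_mul_heatKernel (hs : 0 < s) (x y z : ℝ) :
    heatKernel s x z * heatKernel s y z =
      heatKernel (2 * s) x y * heatKernel (s / 2) ((x + y) / 2) z := by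
  simp only [heatKernel_of_pos hs, heatKernel_of_pos (by positivity : 0 < 2 * s),
    heatKernel_of_pos (by positivity : 0 < s / 2)]
  have hsqrt : √(2 * π * s) * √(2 * π * s) = √(2 * π * (2 * s)) * √(2 * π * (s / 2)) := by
    rw [← sqrt_mul (by positivity), ← sqrt_mul (by positivity)]
    ring_nf
  have hexp : -(x - z) ^ 2 / (2 * s) + -(y - z) ^ 2 / (2 * s) =
      -(x - y) ^ 2 / (2 * (2 * s)) + -((x + y) / 2 - z) ^ 2 / (2 * (s / 2)) := by
    field_simp
    ring
  calc _ = (√(2 * π * s) * √(2 * π * s))⁻¹ *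
        exp (-(x - z) ^ 2 / (2 * s) + -(y - z) ^ 2 / (2 * s)) := by
        rw [exp_add, mul_inv]; ring
    _ = _ := by
        rw [hsqrt, hexp, exp_add, mul_inv]; ring

lemma integral_heatKernel_mul_heatKernel (hs : 0 < s) (x y : ℝ) :
    ∫ z, heatKernel s x z * heatKernel s y z = heatKernel (2 * s) x y := by
  have hs2 : (s / 2).toNNReal ≠ 0 := by simpa using hs
  simp_rw [heatKernel_mul_heatKernel hs, integral_const_mul,
    heatKernel_eq_gaussianPDFReal (half_pos hs), integral_gaussianPDFReal_eq_one _ hs2, mul_one]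

noncomputable def heatKernelDiffSq (a s : ℝ) : ℝ :=
  (√π)⁻¹ * s ^ (-(1 / 2) : ℝ) * (1 - exp (-a ^ 2 / (4 * s)))

lemma heatKernelDiffSq_eq (hs : 0 < s) (x y : ℝ) :
    heatKernelDiffSq (x - y) s =
      heatKernel (2 * s) x x + heatKernel (2 * s) y y - 2 * heatKernel (2 * s) x y := by
  have hsqrt : √(2 * π * (2 * s)) = 2 * √π * √s := by
    rw [show 2 * π * (2 * s) = 2 ^ 2 * π * s by ring, sqrt_mul (by positivity),
      sqrt_mul (by positivity), sqrt_sq zero_le_two]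
  have hrpow : s ^ (-(1 / 2) : ℝ) = (√s)⁻¹ := by
    rw [rpow_neg hs.le, sqrt_eq_rpow]
  simp only [heatKernel_of_pos (by positivity : 0 < 2 * s), heatKernelDiffSq, hsqrt, hrpow,
    show 2 * (2 * s) = 4 * s by ring, sub_self, ne_eq, OfNat.ofNat_ne_zero, not_false_eq_true,
    zero_pow, neg_zero, zero_div, exp_zero, mul_one, mul_inv_rev]
  ring

lemma integral_sq_heatKernel_sub (hs : 0 < s) (x y : ℝ) :
    ∫ z, (heatKernel s x z - heatKernel s y z) ^ 2 = heatKernelDiffSq (x - y) s := by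
  have hint : ∀ u v, Integrable fun z ↦ heatKernel s u z * heatKernel s v z := fun u v ↦ by
    simp_rw [heatKernel_mul_heatKernel hs]
    exact (integrable_heatKernel (half_pos hs) _).const_mul _
  have hexpand : ∀ z, (heatKernel s x z - heatKernel s y z) ^ 2 =
      heatKernel s x z * heatKernel s x z + heatKernel s y z * heatKernel s y z -
        2 * (heatKernel s x z * heatKernel s y z) := fun z ↦ by ring
  have hdiag : Integrable fun z ↦
      heatKernel s x z * heatKernel s x z + heatKernel s y z * heatKernel s y z :=
    (hint x x).add (hint y y)
  simp_rw [hexpand]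
  rw [integral_sub hdiag ((hint x y).const_mul 2), integral_add (hint x x) (hint y y),
    integral_const_mul]
  simp_rw [integral_heatKernel_mul_heatKernel hs, heatKernelDiffSq_eq hs]

lemma heatKernelDiffSq_nonneg (a : ℝ) (hs : 0 ≤ s) : 0 ≤ heatKernelDiffSq a s := by
  have : -a ^ 2 / (4 * s) ≤ 0 := div_nonpos_of_nonpos_of_nonneg (by nlinarith) (by positivity)
  exact mul_nonneg (by positivity) (sub_nonneg.2 (exp_le_one_iff.2 this))

lemma heatKernelDiffSq_le_rpow_neg_half (a : ℝ) (hs : 0 ≤ s) :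
    heatKernelDiffSq a s ≤ (√π)⁻¹ * s ^ (-(1 / 2) : ℝ) :=
  mul_le_of_le_one_right (by positivity) (by linarith [exp_pos (-a ^ 2 / (4 * s))])

lemma heatKernelDiffSq_le_rpow_neg_three_halves (a : ℝ) (hs : 0 < s) :
    heatKernelDiffSq a s ≤ a ^ 2 / (4 * √π) * s ^ (-(3 / 2) : ℝ) := by
  have hexp : 1 - exp (-a ^ 2 / (4 * s)) ≤ a ^ 2 / (4 * s) := by
    linarith [add_one_le_exp (-a ^ 2 / (4 * s)), neg_div (4 * s) (a ^ 2)]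
  calc heatKernelDiffSq a s ≤ (√π)⁻¹ * s ^ (-(1 / 2) : ℝ) * (a ^ 2 / (4 * s)) :=
        mul_le_mul_of_nonneg_left hexp (by positivity)
    _ = a ^ 2 / (4 * √π) * (s ^ (-(1 / 2) : ℝ) / s) := by field_simp
    _ = a ^ 2 / (4 * √π) * s ^ (-(3 / 2) : ℝ) := by
        rw [← rpow_sub_one hs.ne']; norm_num

lemma intervalIntegrable_heatKernelDiffSq (a : ℝ) {u v : ℝ} (hu : 0 ≤ u) (hv : 0 ≤ v) :
    IntervalIntegrable (heatKernelDiffSq a) volume u v := by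
  refine ((intervalIntegral.intervalIntegrable_rpow' (r := -(1 / 2)) (by norm_num)).const_mul
    (√π)⁻¹).mono_fun' (by unfold heatKernelDiffSq; fun_prop) ?_
  filter_upwards [ae_restrict_mem measurableSet_uIoc] with s hs
  have hs0 : 0 ≤ s := (le_min hu hv).trans hs.1.le
  rw [norm_of_nonneg (heatKernelDiffSq_nonneg a hs0)]
  exact heatKernelDiffSq_le_rpow_neg_half a hs0

lemma integral_heatKernelDiffSq_short_time_le (a : ℝ) :
    ∫ s in 0..a ^ 2, heatKernelDiffSq a s ≤ 2 / √π * |a| := by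
  calc ∫ s in 0..a ^ 2, heatKernelDiffSq a s
      ≤ ∫ s in 0..a ^ 2, (√π)⁻¹ * s ^ (-(1 / 2) : ℝ) :=
        intervalIntegral.integral_mono_on (sq_nonneg a)
          (intervalIntegrable_heatKernelDiffSq a le_rfl (sq_nonneg a))
          ((intervalIntegral.intervalIntegrable_rpow' (by norm_num)).const_mul _)
          fun s hs ↦ heatKernelDiffSq_le_rpow_neg_half a hs.1
    _ = 2 / √π * |a| := by
        rw [intervalIntegral.integral_const_mul, integral_rpow (Or.inl (by norm_num)),
          zero_rpow (by norm_num)]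
        norm_num
        rw [← sqrt_eq_rpow, sqrt_sq_eq_abs]
        ring

lemma integral_heatKernelDiffSq_long_time_le {a T : ℝ} (ha : a ≠ 0) (hT : a ^ 2 ≤ T) :
    ∫ s in a ^ 2..T, heatKernelDiffSq a s ≤ |a| / (2 * √π) := by
  have ha2 : 0 < a ^ 2 := by positivity
  have h0 : (0 : ℝ) ∉ Set.uIcc (a ^ 2) T := by
    rw [Set.uIcc_of_le hT]; exact fun h ↦ ha2.not_ge h.1
  calc ∫ s in a ^ 2..T, heatKernelDiffSq a s
      ≤ ∫ s in a ^ 2..T, a ^ 2 / (4 * √π) * s ^ (-(3 / 2) : ℝ) :=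
        intervalIntegral.integral_mono_on hT
          (intervalIntegrable_heatKernelDiffSq a ha2.le (ha2.le.trans hT))
          ((intervalIntegral.intervalIntegrable_rpow (Or.inr h0)).const_mul _)
          fun s hs ↦ heatKernelDiffSq_le_rpow_neg_three_halves a (ha2.trans_le hs.1)
    _ = a ^ 2 / (2 * √π) * ((a ^ 2) ^ (-(1 / 2) : ℝ) - T ^ (-(1 / 2) : ℝ)) := by
        rw [intervalIntegral.integral_const_mul, integral_rpow (Or.inr ⟨by norm_num, h0⟩)]
        norm_num
        ring
    _ ≤ a ^ 2 / (2 * √π) * (a ^ 2) ^ (-(1 / 2) : ℝ) := by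
        gcongr
        linarith [rpow_nonneg (ha2.le.trans hT) (-(1 / 2) : ℝ)]
    _ = |a| / (2 * √π) := by
        rw [rpow_neg ha2.le, ← sqrt_eq_rpow, sqrt_sq_eq_abs, ← sq_abs]
        field_simp

lemma integral_heatKernelDiffSq_le (a : ℝ) {t : ℝ} (ht : 0 ≤ t) :
    ∫ s in 0..t, heatKernelDiffSq a s ≤ 5 / (2 * √π) * |a| := by
  rcases eq_or_ne a 0 with rfl | ha
  · simp [heatKernelDiffSq]
  set T := max t (a ^ 2)
  have hT : 0 ≤ T := ht.trans (le_max_left _ _)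
  calc ∫ s in 0..t, heatKernelDiffSq a s ≤ ∫ s in 0..T, heatKernelDiffSq a s :=
        intervalIntegral.integral_mono_interval le_rfl ht (le_max_left _ _)
          (by filter_upwards [ae_restrict_mem measurableSet_Ioc] with s hs
              using heatKernelDiffSq_nonneg a hs.1.le)
          (intervalIntegrable_heatKernelDiffSq a le_rfl hT)
    _ = (∫ s in 0..a ^ 2, heatKernelDiffSq a s) + ∫ s in a ^ 2..T, heatKernelDiffSq a s :=
        (intervalIntegral.integral_add_adjacent_intervals
          (intervalIntegrable_heatKernelDiffSq a le_rfl (sq_nonneg a))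
          (intervalIntegrable_heatKernelDiffSq a (sq_nonneg a) hT)).symm
    _ ≤ 2 / √π * |a| + |a| / (2 * √π) :=
        add_le_add (integral_heatKernelDiffSq_short_time_le a)
          (integral_heatKernelDiffSq_long_time_le ha (le_max_right _ _))
    _ = 5 / (2 * √π) * |a| := by ring

end

/-- There is a constant `K > 0` such that for all `t > 0` and all `x, y ∈ ℝ`,
`∫₀ᵗ ∫_ℝ (G(s,x,z) − G(s,y,z))² dz ds ≤ K |x−y|`. -/
theorem heatKernel_spatial_L2_modulus :
    ∃ K > (0 : ℝ), ∀ t > (0 : ℝ), ∀ x y : ℝ,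
      (∫ s in (0:ℝ)..t, ∫ z : ℝ, (heatKernel s x z - heatKernel s y z) ^ 2) ≤
        K * |x - y| := by
  refine ⟨5 / (2 * √π), by positivity, fun t ht x y ↦ ?_⟩
  calc (∫ s in (0:ℝ)..t, ∫ z : ℝ, (heatKernel s x z - heatKernel s y z) ^ 2)
      = ∫ s in (0:ℝ)..t, heatKernelDiffSq (x - y) s :=
        intervalIntegral.integral_congr_ae (ae_of_all _ fun s hs ↦
          integral_sq_heatKernel_sub (Set.uIoc_of_le ht.le ▸ hs).1 x y)
    _ ≤ 5 / (2 * √π) * |x - y| := integral_heatKernelDiffSq_le (x - y) ht.le
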